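/- The system of four similarities of ratio 1/2 forming a zipper with vertices (0,0), (0,1/2), (1/2,1/2), (1,1/2), (1,0) and signature (1,0,0,1) has attractor equal to the square [0,1] × [0,1]. -/

import Mathlib

open Set

/-- `K` is the attractor (invariant nonempty compact set) of the system `S`. -/
def IsAttractor {X : Type*} [MetricSpace X] {m : ℕ} (S : Fin m → X → X) (K : Set X) : Prop :=
  K.Nonempty ∧ IsCompact K ∧ K = ⋃ i, S i '' K

/-- `S` is a zipper with vertices `z 0, …, z m` and signature `ε ∈ {0,1}^m`:
a system of injective contractions with `S j (z 0) = z (j + ε j)` and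
`S j (z m) = z (j + 1 - ε j)` (0-based indexing of the maps). -/
def IsZipper {X : Type*} [MetricSpace X] {m : ℕ} (S : Fin m → X → X)
    (z : ℕ → X) (ε : Fin m → ℕ) : Prop :=
  (∀ j, ε j ≤ 1) ∧
  (∀ j, Function.Injective (S j)) ∧
  (∀ j, ∃ r : NNReal, ContractingWith r (S j)) ∧
  (∀ j : Fin m, S j (z 0) = z (j.val + ε j)) ∧
  (∀ j : Fin m, S j (z m) = z (j.val + 1 - ε j))

/-- The affine maps `T i` of the zipper `S_{P,ε}` on `[0,1]` associated to a
partition `x` and signature `ε`. -/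
def zipT {m : ℕ} (x : ℕ → ℝ) (ε : Fin m → ℕ) (i : Fin m) : ℝ → ℝ :=
  fun t => x (i.val + ε i) * (1 - t) + x (i.val + 1 - ε i) * t
/-- Vertices of the square-filling zipper: `(0,0)`, `(0,1/2)`, `(1/2,1/2)`,
`(1,1/2)`, `(1,0)`, in the plane `ℝ² ≃ ℂ`. -/
noncomputable def sqVert : ℕ → ℂ
  | 0 => 0
  | 1 => Complex.I / 2
  | 2 => 1 / 2 + Complex.I / 2
  | 3 => 1 + Complex.I / 2
  | _ => 1

/-- The four similarities of ratio `1/2` (with the appropriate orientations)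
forming a zipper with vertices `sqVert` and signature `(1,0,0,1)`. -/
noncomputable def sqZip : Fin 4 → ℂ → ℂ :=
  ![fun w => -Complex.I * w / 2 + Complex.I / 2,
    fun w => w / 2 + Complex.I / 2,
    fun w => w / 2 + (1 / 2 + Complex.I / 2),
    fun w => Complex.I * w / 2 + 1]

/-!
In coordinates each map sends the unit square onto one of its four quarters of side `1/2`
(rotated by `-π/2`, translated, translated, rotated by `π/2`), so the square is invariant
under the Hutchinson operator; being nonempty and compact it is the attractor.
-/

open scoped NNReal

section Similarity

variable {X : Type*} [MetricSpace X] {f : X → X} {r : ℝ≥0}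

lemma injective_of_dist_eq_mul (hr : r ≠ 0) (hf : ∀ p q, dist (f p) (f q) = r * dist p q) :
    Function.Injective f := fun p q h => by
  simpa [hf, hr] using dist_eq_zero.mpr h

lemma contractingWith_of_dist_eq_mul (hr : r < 1)
    (hf : ∀ p q, dist (f p) (f q) = r * dist p q) : ContractingWith r f :=
  ⟨hr, LipschitzWith.of_dist_le_mul fun p q => (hf p q).le⟩

end Similarity

lemma dist_mul_div_two_add (a b p q : ℂ) :
    dist (a * p / 2 + b) (a * q / 2 + b) = ‖a‖ * dist p q / 2 := by
  rw [dist_add_right, Complex.dist_eq, Complex.dist_eq, ← sub_div, ← mul_sub, norm_div, norm_mul]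
  norm_num

lemma dist_sqZip (i : Fin 4) (p q : ℂ) : dist (sqZip i p) (sqZip i q) = dist p q / 2 := by
  fin_cases i
  · simpa [sqZip] using dist_mul_div_two_add (-Complex.I) (Complex.I / 2) p q
  · simpa [sqZip] using dist_mul_div_two_add 1 (Complex.I / 2) p q
  · simpa [sqZip] using dist_mul_div_two_add 1 (1 / 2 + Complex.I / 2) p q
  · simpa [sqZip] using dist_mul_div_two_add Complex.I 1 p q

@[simp]
lemma sqZip_zero_apply (p : ℂ) : sqZip 0 p = ⟨p.im / 2, (1 - p.re) / 2⟩ :=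
  Complex.ext (by simp [sqZip]) (by simp [sqZip]; ring)

@[simp]
lemma sqZip_one_apply (p : ℂ) : sqZip 1 p = ⟨p.re / 2, (1 + p.im) / 2⟩ :=
  Complex.ext (by simp [sqZip]) (by simp [sqZip]; ring)

@[simp]
lemma sqZip_two_apply (p : ℂ) : sqZip 2 p = ⟨(1 + p.re) / 2, (1 + p.im) / 2⟩ := by
  apply Complex.ext <;> simp [sqZip] <;> ring

@[simp]
lemma sqZip_three_apply (p : ℂ) : sqZip 3 p = ⟨1 - p.im / 2, p.re / 2⟩ :=
  Complex.ext (by simp [sqZip]; ring) (by simp [sqZip])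

lemma isZipper_sqZip : IsZipper sqZip sqVert ![1, 0, 0, 1] := by
  have hdist (i : Fin 4) (p q : ℂ) : dist (sqZip i p) (sqZip i q) = (2⁻¹ : ℝ≥0) * dist p q := by
    rw [dist_sqZip]; push_cast; ring
  refine ⟨by decide, fun i => injective_of_dist_eq_mul (by norm_num) (hdist i),
    fun i => ⟨_, contractingWith_of_dist_eq_mul (by norm_num) (hdist i)⟩, ?_, ?_⟩ <;>
  · intro j
    fin_cases j <;> simp [sqVert, Complex.ext_iff]

lemma mapsTo_sqZip_unitSquare (i : Fin 4) :
    MapsTo (sqZip i) (Icc 0 1 ×ℂ Icc 0 1) (Icc 0 1 ×ℂ Icc 0 1) := by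
  rintro p ⟨⟨h₁, h₂⟩, h₃, h₄⟩
  fin_cases i <;> simp <;> refine ⟨⟨?_, ?_⟩, ?_, ?_⟩ <;> linarith

lemma unitSquare_subset_iUnion_image_sqZip :
    Icc 0 1 ×ℂ Icc 0 1 ⊆ ⋃ i, sqZip i '' (Icc 0 1 ×ℂ Icc 0 1) := by
  rintro w ⟨⟨h₁, h₂⟩, h₃, h₄⟩
  simp only [mem_iUnion, mem_image]
  rcases le_total w.re (1 / 2) with hre | hre <;> rcases le_total w.im (1 / 2) with him | him
  · refine ⟨0, ⟨1 - 2 * w.im, 2 * w.re⟩, ⟨⟨?_, ?_⟩, ?_, ?_⟩, Complex.ext ?_ ?_⟩ <;> simp <;> linarith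
  · refine ⟨1, ⟨2 * w.re, 2 * w.im - 1⟩, ⟨⟨?_, ?_⟩, ?_, ?_⟩, Complex.ext ?_ ?_⟩ <;> simp <;> linarith
  · refine ⟨3, ⟨2 * w.im, 2 - 2 * w.re⟩, ⟨⟨?_, ?_⟩, ?_, ?_⟩, Complex.ext ?_ ?_⟩ <;> simp <;> linarith
  · refine ⟨2, ⟨2 * w.re - 1, 2 * w.im - 1⟩, ⟨⟨?_, ?_⟩, ?_, ?_⟩, Complex.ext ?_ ?_⟩ <;> simp <;>
      linarith

/-- The system of four similarities of ratio `1/2` forming a zipper with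
vertices `(0,0),(0,1/2),(1/2,1/2),(1,1/2),(1,0)` and signature `(1,0,0,1)`
has attractor equal to the square `[0,1] × [0,1]`. -/
theorem stmt7 :
    (∀ i, ∀ p q : ℂ, dist (sqZip i p) (sqZip i q) = dist p q / 2) ∧
    IsZipper sqZip sqVert ![1, 0, 0, 1] ∧
    IsAttractor sqZip {w : ℂ | w.re ∈ Icc (0:ℝ) 1 ∧ w.im ∈ Icc (0:ℝ) 1} :=
  ⟨dist_sqZip, isZipper_sqZip, ⟨0, by simp⟩, isCompact_Icc.reProdIm isCompact_Icc,
    unitSquare_subset_iUnion_image_sqZip.antisymm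
      (iUnion_subset fun i => (mapsTo_sqZip_unitSquare i).image_subset)⟩
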